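/- The category W of W-semigroups has coequalizers: for any two W-morphisms φ, ψ : S → T between W-semigroups there exist a W-semigroup L and a W-morphism η : T → L with η ∘ φ = η ∘ ψ, such that for every W-semigroup R and every W-morphism h : T → R with h ∘ φ = h ∘ ψ there is a unique W-morphism h̃ : L → R with h̃ ∘ η = h. -/

import Mathlib

/-!
STATEMENT 5: The category W of W-semigroups has coequalizers: for any two
W-morphisms φ, ψ : S → T there exist a W-semigroup L and a W-morphism η : T → L with
η ∘ φ = η ∘ ψ, such that for every W-semigroup R and W-morphism h : T → R with
h ∘ φ = h ∘ ψ there is a unique W-morphism h̃ : L → R with h̃ ∘ η = h.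
-/

universe u v w

/-- The axioms of a `W`-semigroup: a commutative monoid with a transitive
auxiliary relation `≺` satisfying `0 ≺ x`, (W1), (W3) and (W4). -/
structure WAxioms (M : Type u) [AddCommMonoid M] (r : M → M → Prop) : Prop where
  trans : ∀ {x y z : M}, r x y → r y z → r x z
  zero_rel : ∀ x : M, r 0 x
  W1 : ∀ x : M, ∃ s : ℕ → M, (∀ n, r (s n) (s (n + 1))) ∧ (∀ n, r (s n) x) ∧
        ∀ y : M, r y x → ∃ n, r y (s n)
  W3 : ∀ {x' x y' y : M}, r x' x → r y' y → r (x' + y') (x + y)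
  W4 : ∀ {x y z : M}, r x (y + z) → ∃ y' z' : M, r y' y ∧ r z' z ∧ r x (y' + z')

/-- A `W`-morphism: preserves addition, `0` and the auxiliary relation, and is
continuous: whenever `y ≺ f x` there is `x' ≺ x` with `y ≺ f x'`. -/
structure IsWHom {M : Type u} {N : Type v} [AddCommMonoid M] [AddCommMonoid N]
    (rM : M → M → Prop) (rN : N → N → Prop) (f : M → N) : Prop where
  map_zero : f 0 = 0
  map_add : ∀ x y : M, f (x + y) = f x + f y
  map_rel : ∀ {x y : M}, rM x y → rN (f x) (f y)
  cont : ∀ (x : M) (y : N), rN y (f x) → ∃ x' : M, rM x' x ∧ rN y (f x')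

theorem WAxioms.transitive {M : Type u} [AddCommMonoid M] {r : M → M → Prop}
    (h : WAxioms M r) : Transitive r := fun _ _ _ hxy hyz => h.trans hxy hyz

theorem isWHom_id {M : Type u} [AddCommMonoid M] {r : M → M → Prop} (h : WAxioms M r) :
    IsWHom r r (id : M → M) := by
  refine ⟨rfl, fun _ _ => rfl, fun hxy => hxy, ?_⟩
  intro x y hyx
  obtain ⟨s, _, hsx, hcof⟩ := h.W1 x
  obtain ⟨n, hn⟩ := hcof y hyx
  exact ⟨s n, hsx n, hn⟩

theorem IsWHom.comp {M : Type u} {N : Type v} {P : Type w} [AddCommMonoid M]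
    [AddCommMonoid N] [AddCommMonoid P] {rM : M → M → Prop} {rN : N → N → Prop}
    {rP : P → P → Prop} (hP : Transitive rP) {g : N → P} {f : M → N}
    (hg : IsWHom rN rP g) (hf : IsWHom rM rN f) : IsWHom rM rP (g ∘ f) := by
  refine ⟨?_, ?_, ?_, ?_⟩
  · show g (f 0) = 0
    rw [hf.map_zero, hg.map_zero]
  · intro x y
    show g (f (x + y)) = g (f x) + g (f y)
    rw [hf.map_add, hg.map_add]
  · exact fun hxy => hg.map_rel (hf.map_rel hxy)
  · intro x y hy
    obtain ⟨u, hu, hyu⟩ := hg.cont (f x) y hy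
    obtain ⟨x', hx', hux'⟩ := hf.cont x u hu
    exact ⟨x', hx', hP hyu (hg.map_rel hux')⟩

/-- The category `W` of `W`-semigroups: objects are `W`-semigroups, morphisms are
`W`-morphisms. -/
structure WCat : Type (u + 1) where
  carrier : Type u
  [addCommMonoid : AddCommMonoid carrier]
  rel : carrier → carrier → Prop
  ax : WAxioms carrier rel

attribute [instance] WCat.addCommMonoid

instance : CategoryTheory.Category WCat.{u} where
  Hom S T := { f : S.carrier → T.carrier // IsWHom S.rel T.rel f }
  id S := ⟨id, isWHom_id S.ax⟩
  comp := fun {X Y Z} f g =>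
    ⟨g.1 ∘ f.1, g.2.comp Z.ax.transitive f.2⟩

open CategoryTheory

/-!
The coequalizer is the quotient `L` of `T` by the additive congruence `~` generated by
`φ s ~ ψ s`, with `[x] ≺ [y]` iff some chain of `~`- and `≺`-steps leads from `x` to an
element `c ≺ y`. Everything hinges on this relation being invariant under `~` on the right:
if `c ≺ d + φ s`, then (W4), continuity of `φ` and interpolation give `c ≺ d' + φ s'` with
`d' + ψ s' ≺ d + ψ s`, so a `≺`-step can be pushed across a generating step of `~`.
-/

theorem WAxioms.exists_between {M : Type u} [AddCommMonoid M] {r : M → M → Prop}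
    (hr : WAxioms M r) {a b : M} (h : r a b) : ∃ m, r a m ∧ r m b := by
  obtain ⟨s, -, hs, hcof⟩ := hr.W1 b
  obtain ⟨n, hn⟩ := hcof a h
  exact ⟨s n, hn, hs n⟩

namespace WCat.Coequalizer

open Relation

variable {S T : WCat.{u}}

theorem exists_rel_add_map_of_rel_add_map (f g : S ⟶ T) {c d : T.carrier} {s : S.carrier}
    (h : T.rel c (d + f.1 s)) :
    ∃ d' s', T.rel c (d' + f.1 s') ∧ T.rel (d' + g.1 s') (d + g.1 s) := by
  obtain ⟨d₀, t, hd₀, ht, hc⟩ := T.ax.W4 h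
  obtain ⟨s', hs', ht'⟩ := f.2.cont s t ht
  obtain ⟨d', hd₀d', hd'd⟩ := T.ax.exists_between hd₀
  exact ⟨d', s', T.ax.trans hc (T.ax.W3 hd₀d' ht'), T.ax.W3 hd'd (g.2.map_rel hs')⟩

variable (φ ψ : S ⟶ T)

def Step (a b : T.carrier) : Prop :=
  ∃ c s, a = c + φ.1 s ∧ b = c + ψ.1 s

theorem Step.add_right {a b : T.carrier} (h : Step φ ψ a b) (e : T.carrier) :
    Step φ ψ (a + e) (b + e) := by
  obtain ⟨c, s, rfl, rfl⟩ := h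
  exact ⟨c + e, s, add_right_comm .., add_right_comm ..⟩

theorem reflTransGen_symmGen_step_add_right {a b : T.carrier}
    (h : ReflTransGen (SymmGen (Step φ ψ)) a b) (e : T.carrier) :
    ReflTransGen (SymmGen (Step φ ψ)) (a + e) (b + e) :=
  ReflTransGen.lift (· + e) (fun _ _ hab => hab.imp (·.add_right φ ψ e) (·.add_right φ ψ e))
    _ _ h

def con : AddCon T.carrier where
  r := ReflTransGen (SymmGen (Step φ ψ))
  iseqv := ⟨fun _ => .refl, fun h => Std.Symm.symm _ _ h, .trans⟩
  add' {a b c d} hab hcd := by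
    refine (reflTransGen_symmGen_step_add_right φ ψ hab c).trans ?_
    rw [add_comm b c, add_comm b d]
    exact reflTransGen_symmGen_step_add_right φ ψ hcd b

theorem con_map (s : S.carrier) : con φ ψ (φ.1 s) (ψ.1 s) :=
  .single (.of_rel ⟨0, s, (zero_add _).symm, (zero_add _).symm⟩)

def Path : T.carrier → T.carrier → Prop :=
  ReflTransGen fun a b => con φ ψ a b ∨ T.rel a b

def Below (x y : T.carrier) : Prop :=
  ∃ c, Path φ ψ x c ∧ T.rel c y

variable {φ ψ}

theorem Path.of_con {a b : T.carrier} (h : con φ ψ a b) : Path φ ψ a b :=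
  .single (.inl h)

theorem Path.of_rel {a b : T.carrier} (h : T.rel a b) : Path φ ψ a b :=
  .single (.inr h)

theorem below_of_rel {x y : T.carrier} (h : T.rel x y) : Below φ ψ x y :=
  ⟨x, .refl, h⟩

theorem Below.path {x y : T.carrier} (h : Below φ ψ x y) : Path φ ψ x y :=
  let ⟨_, hxc, hcy⟩ := h
  hxc.tail (.inr hcy)

theorem Path.trans_below {x y z : T.carrier} (hxy : Path φ ψ x y) (hyz : Below φ ψ y z) :
    Below φ ψ x z :=
  let ⟨c, hyc, hcz⟩ := hyz
  ⟨c, hxy.trans hyc, hcz⟩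

theorem Below.trans {x y z : T.carrier} (hxy : Below φ ψ x y) (hyz : Below φ ψ y z) :
    Below φ ψ x z :=
  hxy.path.trans_below hyz

theorem Below.exists_between {x y : T.carrier} (h : Below φ ψ x y) :
    ∃ m, Below φ ψ x m ∧ T.rel m y := by
  obtain ⟨c, hxc, hcy⟩ := h
  obtain ⟨m, hcm, hmy⟩ := T.ax.exists_between hcy
  exact ⟨m, ⟨c, hxc, hcm⟩, hmy⟩

theorem Below.of_step {x y w : T.carrier} (h : Below φ ψ x y) (hyw : SymmGen (Step φ ψ) y w) :
    Below φ ψ x w := by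
  obtain ⟨c, hxc, hcy⟩ := h
  rcases hyw with ⟨d, s, rfl, rfl⟩ | ⟨d, s, rfl, rfl⟩
  · obtain ⟨d', s', hc, hd'⟩ := exists_rel_add_map_of_rel_add_map φ ψ hcy
    exact ⟨d' + ψ.1 s', (hxc.trans (Path.of_rel hc)).tail
      (.inl ((con φ ψ).add (AddCon.refl _ d') (con_map φ ψ s'))), hd'⟩
  · obtain ⟨d', s', hc, hd'⟩ := exists_rel_add_map_of_rel_add_map ψ φ hcy
    exact ⟨d' + φ.1 s', (hxc.trans (Path.of_rel hc)).tail
      (.inl ((con φ ψ).add (AddCon.refl _ d') (AddCon.symm _ (con_map φ ψ s')))), hd'⟩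

theorem Below.of_con {x y w : T.carrier} (h : Below φ ψ x y) (hyw : con φ ψ y w) :
    Below φ ψ x w := by
  induction hyw with
  | refl => exact h
  | tail _ hstep ih => exact ih.of_step hstep

theorem below_congr {x x' y y' : T.carrier} (hx : con φ ψ x x') (hy : con φ ψ y y') :
    Below φ ψ x y ↔ Below φ ψ x' y' :=
  ⟨fun h => (Path.of_con (AddCon.symm _ hx)).trans_below (h.of_con hy),
    fun h => (Path.of_con hx).trans_below (h.of_con (AddCon.symm _ hy))⟩

theorem Path.add_rel {a b e e' : T.carrier} (hab : Path φ ψ a b) (he : T.rel e e') :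
    ∃ e'', Path φ ψ (a + e) (b + e'') ∧ T.rel e'' e' := by
  induction hab with
  | refl => exact ⟨e, .refl, he⟩
  | tail _ hstep ih =>
    obtain ⟨e'', hpath, he''⟩ := ih
    rcases hstep with hcon | hrel
    · exact ⟨e'', hpath.trans (Path.of_con ((con φ ψ).add hcon (AddCon.refl _ e''))), he''⟩
    · obtain ⟨f, he''f, hfe'⟩ := T.ax.exists_between he''
      exact ⟨f, hpath.trans (Path.of_rel (T.ax.W3 hrel he''f)), hfe'⟩

theorem Below.add_rel {x' x e e' : T.carrier} (hx : Below φ ψ x' x) (he : T.rel e e') :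
    Below φ ψ (x' + e) (x + e') := by
  obtain ⟨c, hx'c, hcx⟩ := hx
  obtain ⟨e'', hpath, he''⟩ := hx'c.add_rel he
  exact ⟨c + e'', hpath, T.ax.W3 hcx he''⟩

theorem Below.add {x' x y' y : T.carrier} (hx : Below φ ψ x' x) (hy : Below φ ψ y' y) :
    Below φ ψ (x' + y') (x + y) := by
  obtain ⟨d, hy'd, hdy⟩ := hy
  induction hy'd using ReflTransGen.head_induction_on generalizing x' x with
  | refl => exact hx.add_rel hdy
  | head hstep _ ih =>
    rcases hstep with hcon | hrel
    · exact (Path.of_con ((con φ ψ).add (AddCon.refl _ x') hcon)).trans_below (ih hx)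
    · -- a `≺`-step on the `y`-side needs a `≺`-step on the `x`-side; interpolate to get one
      obtain ⟨m, hx'm, hmx⟩ := hx.exists_between
      exact (hx'm.add_rel hrel).trans (ih (below_of_rel hmx))

variable (φ ψ)

def rel (a b : (con φ ψ).Quotient) : Prop :=
  AddCon.liftOn₂ a b (Below φ ψ) fun _ _ _ _ hx hy => propext (below_congr hx hy)

theorem wAxioms : WAxioms (con φ ψ).Quotient (rel φ ψ) where
  trans {x y z} := by
    induction x using AddCon.induction_on
    induction y using AddCon.induction_on
    induction z using AddCon.induction_on
    exact Below.trans
  zero_rel x := by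
    induction x using AddCon.induction_on
    exact below_of_rel (T.ax.zero_rel _)
  W1 x := by
    induction x using AddCon.induction_on with | _ x => ?_
    obtain ⟨s, hmono, hs, hcof⟩ := T.ax.W1 x
    refine ⟨fun n => s n, fun n => below_of_rel (hmono n), fun n => below_of_rel (hs n), ?_⟩
    intro y hy
    induction y using AddCon.induction_on with | _ y => ?_
    obtain ⟨c, hyc, hcx⟩ := hy
    obtain ⟨n, hn⟩ := hcof c hcx
    exact ⟨n, c, hyc, hn⟩
  W3 {x' x y' y} := by
    induction x' using AddCon.induction_on
    induction x using AddCon.induction_on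
    induction y' using AddCon.induction_on
    induction y using AddCon.induction_on
    exact Below.add
  W4 {x y z} := by
    induction x using AddCon.induction_on
    induction y using AddCon.induction_on with | _ y => ?_
    induction z using AddCon.induction_on with | _ z => ?_
    rintro ⟨c, hxc, hc⟩
    obtain ⟨y', z', hy', hz', hc'⟩ := T.ax.W4 hc
    exact ⟨y', z', below_of_rel hy', below_of_rel hz', c, hxc, hc'⟩

def obj : WCat.{u} := ⟨(con φ ψ).Quotient, rel φ ψ, wAxioms φ ψ⟩

def π : T ⟶ obj φ ψ where
  val x := (x : (con φ ψ).Quotient)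
  property.map_zero := rfl
  property.map_add _ _ := rfl
  property.map_rel h := below_of_rel h
  property.cont x y hy := by
    induction y using AddCon.induction_on with | _ y => ?_
    obtain ⟨m, hym, hmx⟩ := Below.exists_between hy
    exact ⟨m, hmx, hym⟩

theorem condition : φ ≫ π φ ψ = ψ ≫ π φ ψ :=
  Subtype.ext <| funext fun s => (AddCon.eq _).2 (con_map φ ψ s)

variable {φ ψ} {R : WCat.{u}} {h : T ⟶ R}

theorem map_eq_of_con (hco : φ ≫ h = ψ ≫ h) {x y : T.carrier} (hxy : con φ ψ x y) :
    h.1 x = h.1 y := by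
  have hstep : ∀ c s, h.1 (c + φ.1 s) = h.1 (c + ψ.1 s) := fun c s => by
    rw [h.2.map_add, h.2.map_add]
    exact congrArg _ (congrFun (congrArg Subtype.val hco) s)
  induction hxy with
  | refl => rfl
  | tail _ hyz ih =>
    rcases hyz with ⟨c, s, rfl, rfl⟩ | ⟨c, s, rfl, rfl⟩
    · exact ih.trans (hstep c s)
    · exact ih.trans (hstep c s).symm

theorem rel_map_of_path (hco : φ ≫ h = ψ ≫ h) {x y : T.carrier} {z : R.carrier}
    (hxy : Path φ ψ x y) (hyz : R.rel (h.1 y) z) : R.rel (h.1 x) z := by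
  induction hxy using ReflTransGen.head_induction_on with
  | refl => exact hyz
  | head hstep _ ih =>
    rcases hstep with hcon | hrel
    · rwa [map_eq_of_con hco hcon]
    · exact R.ax.trans (h.2.map_rel hrel) ih

theorem rel_map_of_below (hco : φ ≫ h = ψ ≫ h) {x y : T.carrier} (hxy : Below φ ψ x y) :
    R.rel (h.1 x) (h.1 y) :=
  let ⟨_, hxc, hcy⟩ := hxy
  rel_map_of_path hco hxc (h.2.map_rel hcy)

variable (φ ψ)

def desc (h : T ⟶ R) (hco : φ ≫ h = ψ ≫ h) : obj φ ψ ⟶ R where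
  val := (con φ ψ).lift ⟨⟨h.1, h.2.map_zero⟩, h.2.map_add⟩ fun _ _ => map_eq_of_con hco
  property.map_zero := map_zero _
  property.map_add := map_add _
  property.map_rel {x y} := by
    induction x using AddCon.induction_on
    induction y using AddCon.induction_on
    exact rel_map_of_below hco
  property.cont x y hy := by
    induction x using AddCon.induction_on with | _ x => ?_
    obtain ⟨x', hx', hy'⟩ := h.2.cont x y hy
    exact ⟨(x' : (con φ ψ).Quotient), below_of_rel hx', hy'⟩

theorem π_desc (hco : φ ≫ h = ψ ≫ h) : π φ ψ ≫ desc φ ψ h hco = h := rfl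

theorem hom_ext {k k' : obj φ ψ ⟶ R} (hk : π φ ψ ≫ k = π φ ψ ≫ k') : k = k' :=
  Subtype.ext <| funext fun q =>
    AddCon.induction_on q fun x => congrFun (congrArg Subtype.val hk) x

end WCat.Coequalizer

/-- **The category W has coequalizers.** -/
theorem w_has_coequalizers (S T : WCat.{u}) (φ ψ : S ⟶ T) :
    ∃ (L : WCat.{u}) (η : T ⟶ L), φ ≫ η = ψ ≫ η ∧
      ∀ (R : WCat.{u}) (h : T ⟶ R), φ ≫ h = ψ ≫ h →
        ∃! k : L ⟶ R, η ≫ k = h := by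
  open WCat.Coequalizer in
  exact ⟨obj φ ψ, π φ ψ, condition φ ψ, fun _ h hco =>
    ⟨desc φ ψ h hco, π_desc φ ψ hco, fun _ hk => hom_ext φ ψ (hk.trans (π_desc φ ψ hco).symm)⟩⟩
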